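/- For a terminal pair (C, L) — a tree-like rational nodal curve whose positive-degree part C_+ and negative-degree part C_- are disjoint — with C_+ having k connected components, h^0(C, L) = (∑_{i∈I_+} d_i) + k. -/

import Mathlib

open scoped BigOperators

/-- Evaluation of a binary form with `n` coefficients (degree `n - 1`) at the point `(a, b)`,
as a linear functional on the coefficient space. -/
noncomputable def evalForm (n : ℕ) (a b : ℂ) : (Fin n → ℂ) →ₗ[ℂ] ℂ :=
  ∑ i : Fin n, (a ^ (i : ℕ) * b ^ (n - 1 - (i : ℕ))) • LinearMap.proj i

/-- The gluing condition at a node joining components `i` and `j`, with node coordinates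
`p` on component `i` and `q` on component `j`. -/
noncomputable def glueCond {I : Type*} (m : I → ℕ) (i j : I) (p q : ℂ × ℂ) :
    (∀ k, Fin (m k) → ℂ) →ₗ[ℂ] ℂ :=
  (evalForm (m i) p.1 p.2).comp
      (LinearMap.proj i : (∀ k, Fin (m k) → ℂ) →ₗ[ℂ] (Fin (m i) → ℂ)) -
    (evalForm (m j) q.1 q.2).comp
      (LinearMap.proj j : (∀ k, Fin (m k) → ℂ) →ₗ[ℂ] (Fin (m j) → ℂ))

/-- The space of global sections of a line bundle on a nodal curve with rational components:
the dual graph is `G`, component `i` carries sections with `m i` coefficients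
(i.e. degree `m i - 1`), and for each edge the sections agree at the node. -/
noncomputable def nodalSections {I : Type*} (G : SimpleGraph I) (m : I → ℕ)
    (node : ∀ i j, G.Adj i j → ℂ × ℂ) : Submodule ℂ (∀ k, Fin (m k) → ℂ) :=
  ⨅ (i) (j) (h : G.Adj i j),
    LinearMap.ker (glueCond m i j (node i j h) (node j i h.symm))

/-- The nodes are genuine points of `ℙ¹` (nonzero coordinates) and the nodes lying on one
and the same component are pairwise distinct as points of `ℙ¹`. -/
def NodesOk {I : Type*} (G : SimpleGraph I) (node : ∀ i j, G.Adj i j → ℂ × ℂ) : Prop :=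
  (∀ i j (h : G.Adj i j), node i j h ≠ 0) ∧
    ∀ i j j' (h : G.Adj i j) (h' : G.Adj i j'), j ≠ j' →
      (node i j h).1 * (node i j' h').2 ≠ (node i j' h').1 * (node i j h).2

/-- The number of nodes joining component `i` to components of negative degree. -/
def eNeg {I : Type*} [Fintype I] (G : SimpleGraph I) [DecidableRel G.Adj]
    (d : I → ℤ) (i : I) : ℕ :=
  (Finset.univ.filter fun j => G.Adj i j ∧ d j < 0).card

/-!
On a terminal pair no node joins `C₊` to `C₋`, and the gluing conditions at nodes inside `C₋`
are vacuous because those components carry no sections; so `H⁰(C, L)` is the space of sections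
over the forest `C₊`. Deleting a leaf edge `s(v, u)` of a forest removes exactly one independent
linear condition: a section supported on the leaf `v` and nonzero at the node satisfies all the
other gluing conditions. Hence `h⁰ = ∑_{I₊} (dᵢ + 1) - e`, and a forest with `e` edges and
`k` components on `|I₊|` vertices has `e + k = |I₊|`.
-/

namespace SimpleGraph

variable {V : Type*} {G : SimpleGraph V}

lemma IsAcyclic.exists_adj_forall_adj_eq [Finite V] (hG : G.IsAcyclic)
    (hE : G.edgeSet.Nonempty) : ∃ v u, G.Adj v u ∧ ∀ w, G.Adj v w → w = u := by
  obtain ⟨e, he⟩ := hE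
  induction e using Sym2.ind with | _ a b =>
  have : Nonempty V := ⟨a⟩
  -- the start of a longest path is a leaf
  obtain ⟨v, _, p, hp, hmax⟩ := Walk.exists_isPath_forall_isPath_length_le_length G
  have hnil : ¬ p.Nil := by
    have := hmax _ _ _ (Walk.IsPath.of_adj (G.mem_edgeSet.mp he))
    rw [← Walk.length_eq_zero_iff]
    simp only [Walk.length_cons, Walk.length_nil, zero_add] at this
    omega
  refine ⟨v, p.snd, p.adj_snd hnil, fun w hw => hG.eq_snd_of_adj_start hp hw ?_⟩
  by_contra hws
  have := hmax _ _ _ (hp.cons hws (h := hw.symm))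
  simp at this

lemma card_edgeSet_deleteEdges_add_one [Finite V] {e : Sym2 V} (he : e ∈ G.edgeSet) :
    Nat.card (G.deleteEdges {e}).edgeSet + 1 = Nat.card G.edgeSet := by
  simp only [Nat.card_coe_set_eq, edgeSet_deleteEdges]
  exact Set.ncard_sdiff_singleton_add_one he

lemma card_connectedComponent_bot :
    Nat.card (⊥ : SimpleGraph V).ConnectedComponent = Nat.card V :=
  Nat.card_congr (Equiv.ofBijective _ ⟨fun _ _ h => reachable_bot.mp (ConnectedComponent.exact h),
    fun c => c.exists_rep⟩).symm

lemma deleteEdges_singleton_lt {v u : V} (huv : G.Adj v u) : G.deleteEdges {s(v, u)} < G :=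
  lt_of_le_of_ne (deleteEdges_le _) fun h => by
    have := huv
    rw [← h, deleteEdges_adj] at this
    simp at this

lemma not_adj_deleteEdges_of_forall_adj_eq {v u : V} (hleaf : ∀ w, G.Adj v w → w = u) (w : V) :
    ¬ (G.deleteEdges {s(v, u)}).Adj v w := fun hw =>
  (deleteEdges_adj.mp hw).2 (by rw [hleaf w (deleteEdges_adj.mp hw).1]; rfl)

lemma card_connectedComponent_deleteEdges_of_forall_adj_eq [Finite V] {v u : V}
    (huv : G.Adj v u) (hleaf : ∀ w, G.Adj v w → w = u) :
    Nat.card (G.deleteEdges {s(v, u)}).ConnectedComponent = Nat.card G.ConnectedComponent + 1 := by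
  classical
  set G' := G.deleteEdges {s(v, u)}
  have hreach_v : ∀ y, G'.Reachable v y → y = v := by
    rintro y ⟨p⟩
    cases p with
    | nil => rfl
    | cons h _ => exact absurd h (not_adj_deleteEdges_of_forall_adj_eq hleaf _)
  -- merging the leaf `v` into `u` turns reachability in `G` into reachability in `G'`
  let r : V → V := fun x => if x = v then u else x
  have hr : ∀ x, r x ≠ v := fun x => by by_cases hx : x = v <;> simp [r, hx, huv.ne']
  have hreach : ∀ x y, G.Reachable x y ↔ G'.Reachable (r x) (r y) := by
    refine fun x y => ⟨fun h => ?_, fun h => ?_⟩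
    · rw [reachable_iff_reflTransGen] at h ⊢
      refine Relation.ReflTransGen.lift' r (fun a b hab => ?_) _ _ h
      by_cases ha : a = v
      · simpa [Function.onFun, r, ha, hleaf b (ha ▸ hab)] using .refl
      by_cases hb : b = v
      · simpa [Function.onFun, r, hb, hleaf a (hb ▸ hab.symm)] using .refl
      refine .single ?_
      simp only [r, ha, hb, if_false]
      exact deleteEdges_adj.mpr ⟨hab, by simp [ha, hb]⟩
    · have hxr : ∀ x, G.Reachable x (r x) := fun x => by
        by_cases hx : x = v
        · simpa [r, hx] using huv.reachable
        · simp [r, hx]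
      exact (hxr x).trans ((h.mono (deleteEdges_le _)).trans (hxr y).symm)
  let g : G.ConnectedComponent → G'.ConnectedComponent :=
    ConnectedComponent.lift (fun x => G'.connectedComponentMk (r x))
      fun x y p _ => ConnectedComponent.sound ((hreach x y).mp p.reachable)
  have hg : Function.Injective g := by
    refine ConnectedComponent.ind₂ fun x y h => ConnectedComponent.sound ((hreach x y).mpr ?_)
    exact ConnectedComponent.exact h
  have hrange : Set.range g = Set.univ \ {G'.connectedComponentMk v} := by
    ext c
    induction c using ConnectedComponent.ind with | _ y =>
    simp only [Set.mem_range, Set.mem_sdiff, Set.mem_univ, true_and, Set.mem_singleton_iff]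
    constructor
    · rintro ⟨c, hc⟩ hyv
      induction c using ConnectedComponent.ind with | _ x =>
      exact hr x (hreach_v _ (ConnectedComponent.exact (hc.trans hyv)).symm)
    · intro hy
      have hyv : y ≠ v := by rintro rfl; exact hy rfl
      exact ⟨G.connectedComponentMk y, by simp [g, r, hyv]⟩
  rw [← Nat.card_range_of_injective hg, ← Set.ncard_univ G'.ConnectedComponent,
    ← Set.ncard_sdiff_singleton_add_one (Set.mem_univ (G'.connectedComponentMk v)), ← hrange,
    Nat.card_coe_set_eq]

lemma card_edgeSet_map {W : Type*} (f : V ↪ W) (G : SimpleGraph V) :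
    Nat.card (G.map f).edgeSet = Nat.card G.edgeSet := by
  rw [Nat.card_coe_set_eq, Nat.card_coe_set_eq, edgeSet_map,
    Set.ncard_image_of_injective _ f.sym2Map.injective]

theorem IsAcyclic.card_edgeSet_add_card_connectedComponent [Finite V] (hG : G.IsAcyclic) :
    Nat.card G.edgeSet + Nat.card G.ConnectedComponent = Nat.card V := by
  induction G using WellFoundedLT.induction with | _ G ih =>
  rcases G.edgeSet.eq_empty_or_nonempty with hE | hE
  · rw [edgeSet_eq_empty] at hE
    subst hE
    simp [card_connectedComponent_bot]
  obtain ⟨v, u, huv, hleaf⟩ := hG.exists_adj_forall_adj_eq hE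
  have := ih _ (deleteEdges_singleton_lt huv) (hG.anti (deleteEdges_le _))
  rw [card_connectedComponent_deleteEdges_of_forall_adj_eq huv hleaf] at this
  have := card_edgeSet_deleteEdges_add_one (G.mem_edgeSet.mpr huv)
  omega

end SimpleGraph

open Module SimpleGraph

lemma Submodule.finrank_inf_ker_add_one {K V : Type*} [Field K] [AddCommGroup V] [Module K V]
    [FiniteDimensional K V] {W : Submodule K V} {φ : Module.Dual K V} {x : V} (hx : x ∈ W)
    (hφx : φ x ≠ 0) : finrank K ↥(W ⊓ LinearMap.ker φ) + 1 = finrank K W := by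
  have hf : φ.domRestrict W ≠ 0 := fun h =>
    hφx (by simpa using LinearMap.congr_fun h ⟨x, hx⟩)
  rw [← Module.Dual.finrank_ker_add_one_of_ne_zero hf, LinearMap.ker_domRestrict,
    ← Submodule.map_comap_subtype, Submodule.finrank_map_subtype_eq]

lemma evalForm_apply (n : ℕ) (a b : ℂ) (x : Fin n → ℂ) :
    evalForm n a b x = ∑ i : Fin n, a ^ (i : ℕ) * b ^ (n - 1 - i) * x i := by
  simp [evalForm]

lemma evalForm_eq_zero {n : ℕ} (hn : n = 0) (a b : ℂ) (x : Fin n → ℂ) :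
    evalForm n a b x = 0 := by
  subst hn
  simp [evalForm_apply]

lemma evalForm_single (n : ℕ) (a b : ℂ) (i : Fin n) :
    evalForm n a b (Pi.single i 1) = a ^ (i : ℕ) * b ^ (n - 1 - i) := by
  rw [evalForm_apply, Finset.sum_eq_single i (fun j _ hj => by simp [hj]) (by simp)]
  simp

lemma exists_evalForm_ne_zero {n : ℕ} (hn : 1 ≤ n) {p : ℂ × ℂ} (hp : p ≠ 0) :
    ∃ x : Fin n → ℂ, evalForm n p.1 p.2 x ≠ 0 := by
  by_cases h1 : p.1 = 0
  · have h2 : p.2 ≠ 0 := fun h2 => hp (Prod.ext h1 h2)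
    exact ⟨Pi.single ⟨0, hn⟩ 1, by simpa [evalForm_single] using pow_ne_zero _ h2⟩
  · refine ⟨Pi.single ⟨n - 1, by omega⟩ 1, ?_⟩
    simpa [evalForm_single] using pow_ne_zero _ h1

lemma glueCond_apply {I : Type*} (m : I → ℕ) (i j : I) (p q : ℂ × ℂ)
    (x : ∀ k, Fin (m k) → ℂ) :
    glueCond m i j p q x = evalForm (m i) p.1 p.2 (x i) - evalForm (m j) q.1 q.2 (x j) :=
  rfl

section NodalSections

variable {I : Type*} {m : I → ℕ}

lemma mem_nodalSections {G : SimpleGraph I}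
    {node : ∀ i j, G.Adj i j → ℂ × ℂ} {x : ∀ k, Fin (m k) → ℂ} :
    x ∈ nodalSections G m node ↔ ∀ i j (h : G.Adj i j),
      evalForm (m i) (node i j h).1 (node i j h).2 (x i) =
        evalForm (m j) (node j i h.symm).1 (node j i h.symm).2 (x j) := by
  simp [nodalSections, glueCond_apply, sub_eq_zero]

lemma nodalSections_eq_of_le {G H : SimpleGraph I} (hle : H ≤ G)
    (node : ∀ i j, G.Adj i j → ℂ × ℂ)
    (hzero : ∀ i j, G.Adj i j → ¬ H.Adj i j → m i = 0 ∧ m j = 0) :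
    nodalSections G m node = nodalSections H m (fun i j h => node i j (hle h)) := by
  ext x
  simp only [mem_nodalSections]
  refine ⟨fun hx i j h => hx i j (hle h), fun hx i j h => ?_⟩
  by_cases hH : H.Adj i j
  · exact hx i j hH
  obtain ⟨hi, hj⟩ := hzero i j h hH
  rw [evalForm_eq_zero hi, evalForm_eq_zero hj]

lemma nodalSections_eq_deleteEdges_inf_ker {G : SimpleGraph I}
    (node : ∀ i j, G.Adj i j → ℂ × ℂ) {v u : I} (huv : G.Adj v u) :
    nodalSections G m node =
      nodalSections (G.deleteEdges {s(v, u)}) m (fun i j h => node i j (G.deleteEdges_le _ h)) ⊓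
        LinearMap.ker (glueCond m v u (node v u huv) (node u v huv.symm)) := by
  ext x
  simp only [Submodule.mem_inf, mem_nodalSections, LinearMap.mem_ker, glueCond_apply,
    sub_eq_zero]
  refine ⟨fun hx => ⟨fun i j h => hx i j _, hx v u huv⟩, fun ⟨hx, hvu⟩ i j h => ?_⟩
  by_cases he : s(i, j) = s(v, u)
  · rcases Sym2.eq_iff.mp he with ⟨rfl, rfl⟩ | ⟨rfl, rfl⟩
    · exact hvu
    · exact hvu.symm
  · exact hx i j (deleteEdges_adj.mpr ⟨h, he⟩)

theorem SimpleGraph.IsAcyclic.finrank_nodalSections_add_card_edgeSet [Fintype I]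
    {G : SimpleGraph I} (hG : G.IsAcyclic) (node : ∀ i j, G.Adj i j → ℂ × ℂ)
    (hnode : ∀ i j (h : G.Adj i j), node i j h ≠ 0) (hm : ∀ i j, G.Adj i j → 1 ≤ m i) :
    finrank ℂ (nodalSections G m node) + Nat.card G.edgeSet = ∑ i, m i := by
  classical
  induction G using WellFoundedLT.induction with | _ G ih =>
  rcases G.edgeSet.eq_empty_or_nonempty with hE | hE
  · rw [edgeSet_eq_empty] at hE
    subst hE
    have : nodalSections ⊥ m node = ⊤ := by ext; simp [mem_nodalSections]
    rw [this, finrank_top, Module.finrank_pi_fintype]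
    simp
  obtain ⟨v, u, huv, hleaf⟩ := hG.exists_adj_forall_adj_eq hE
  have hle : G.deleteEdges {s(v, u)} ≤ G := deleteEdges_le _
  -- a section supported on the leaf `v` meets every gluing condition except the one at `s(v, u)`
  obtain ⟨y, hy⟩ := exists_evalForm_ne_zero (hm v u huv) (hnode v u huv)
  have hmem : Pi.single v y ∈ nodalSections (G.deleteEdges {s(v, u)}) m
      (fun i j h => node i j (hle h)) := mem_nodalSections.mpr fun i j h => by
    have hi : i ≠ v := by rintro rfl; exact not_adj_deleteEdges_of_forall_adj_eq hleaf j h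
    have hj : j ≠ v := by rintro rfl; exact not_adj_deleteEdges_of_forall_adj_eq hleaf i h.symm
    rw [Pi.single_eq_of_ne hi, Pi.single_eq_of_ne hj, map_zero, map_zero]
  have hglue : glueCond m v u (node v u huv) (node u v huv.symm) (Pi.single v y) ≠ 0 := by
    simpa [glueCond_apply, huv.ne'] using hy
  have := ih _ (deleteEdges_singleton_lt huv) (hG.anti hle) _ (fun i j h => hnode i j (hle h))
    (fun i j h => hm i j (hle h))
  rw [nodalSections_eq_deleteEdges_inf_ker node huv,
    ← card_edgeSet_deleteEdges_add_one (G.mem_edgeSet.mpr huv)]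
  have := Submodule.finrank_inf_ker_add_one hmem hglue
  omega

end NodalSections

lemma sum_toNat_add_one_eq {I : Type*} [Fintype I] (d : I → ℤ) :
    ∑ i, ((d i + 1).toNat : ℤ) = ∑ i : {i // 0 ≤ d i}, d i + Nat.card {i // 0 ≤ d i} := by
  rw [← Fintype.sum_subtype_add_sum_subtype (fun i => 0 ≤ d i),
    Fintype.sum_eq_zero (fun i : {i // ¬ 0 ≤ d i} => ((d i + 1).toNat : ℤ)) fun i => by
      have := i.2; omega,
    add_zero, Nat.card_eq_fintype_card, Fintype.card_eq_sum_ones, Nat.cast_sum,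
    ← Finset.sum_add_distrib]
  refine Finset.sum_congr rfl fun i _ => ?_
  have := i.2
  push_cast
  omega

theorem statement4_general {I : Type} [Fintype I]
    (G : SimpleGraph I) (hG : G.IsAcyclic) (d : I → ℤ)
    (node : ∀ i j, G.Adj i j → ℂ × ℂ) (hnode : NodesOk G node)
    (hterm : ∀ i j, G.Adj i j → (0 ≤ d i ↔ 0 ≤ d j)) :
    (Module.finrank ℂ ↥(nodalSections G (fun i => (d i + 1).toNat) node) : ℤ)
      = (∑ i : {i : I // 0 ≤ d i}, d i.1)
        + Nat.card (G.comap (Subtype.val : {i : I // 0 ≤ d i} → I)).ConnectedComponent := by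
  set Gpos := G.comap (Subtype.val : {i : I // 0 ≤ d i} → I)
  let f := Function.Embedding.subtype fun i => 0 ≤ d i
  have hle : Gpos.map f ≤ G := map_comap_le f G
  have hadj : ∀ i j, G.Adj i j → 0 ≤ d i → (Gpos.map f).Adj i j := fun i j h hi =>
    (map_adj f Gpos i j).mpr ⟨⟨i, hi⟩, ⟨j, (hterm i j h).mp hi⟩, h, rfl, rfl⟩
  have hsections := nodalSections_eq_of_le hle node (m := fun i => (d i + 1).toNat)
    fun i j h hpos => by
      have hi : ¬ 0 ≤ d i := fun hi => hpos (hadj i j h hi)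
      have hj : ¬ 0 ≤ d j := fun hj => hpos (hadj j i h.symm hj).symm
      omega
  have hdim := (hG.anti hle).finrank_nodalSections_add_card_edgeSet
    (m := fun i => (d i + 1).toNat) _ (fun i j h => hnode.1 i j (hle h)) fun i j h => by
      obtain ⟨i', j', -, rfl, rfl⟩ := (map_adj f Gpos i j).mp h
      have : 0 ≤ d (f i') := i'.2
      omega
  have hforest : Nat.card Gpos.edgeSet + Nat.card Gpos.ConnectedComponent =
      Nat.card {i // 0 ≤ d i} := (hG.of_comap f).card_edgeSet_add_card_connectedComponent
  rw [card_edgeSet_map] at hdim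
  have hsum := sum_toNat_add_one_eq d
  rw [hsections]
  zify at hdim hforest
  linarith

/-- For a terminal pair `(C, L)` — a tree-like rational nodal curve whose positive part
`C₊` and negative part `C₋` are disjoint (no node joins them) — with `C₊` having `k`
connected components: `h⁰(C, L) = (∑_{i ∈ I₊} d i) + k`. -/
theorem statement4 {I : Type} [Fintype I] [DecidableEq I]
    (G : SimpleGraph I) [DecidableRel G.Adj] (hG : G.IsAcyclic) (d : I → ℤ)
    (node : ∀ i j, G.Adj i j → ℂ × ℂ) (hnode : NodesOk G node)
    (hterm : ∀ i j, G.Adj i j → (0 ≤ d i ↔ 0 ≤ d j)) :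
    (Module.finrank ℂ ↥(nodalSections G (fun i => (d i + 1).toNat) node) : ℤ)
      = (∑ i : {i : I // 0 ≤ d i}, d i.1)
        + Nat.card (G.comap (Subtype.val : {i : I // 0 ≤ d i} → I)).ConnectedComponent :=
  statement4_general G hG d node hnode hterm
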